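/- arXiv:2210.11304 — 4 statements merged into one kernel-verified Lean document; each statement's English description precedes it below -/
import Mathlib

section
/- Let Γ be a group acting by homeomorphisms on a compact Hausdorff topological space X, equipped with its Borel σ-algebra, and let Λ ≤ Γ be a subgroup that is singular for this action, i.e., for every Λ-invariant Borel probability measure μ on X and every γ ∈ Γ \ Λ, the measures μ and γ_*μ are mutually singular. Suppose Λ' is a subgroup of finite index in Λ, and Λ'' is a subgroup of Γ containing Λ' such that there exists at least one Λ''-invariant Borel probability measure on X. Then Λ'' ≤ Λ. (This is the content of the paper's lemma that a singular subgroup is commensurably maximal amenable, with the amenability of the overgroup Λ'' entering only through the existence of the invariant probability measure.) -/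
open MeasureTheory ENNReal

/-!
Average the pushforwards of an invariant probability measure `μ` of `Λ''` over the finitely
many cosets of `Λ' ⊓ Λ` in `Λ`: the result `ν` is a `Λ`-invariant probability measure with
`μ ≪ ν`. For `g ∈ Λ'' \ Λ` singularity gives `ν ⟂ₘ g_*ν`, and since `μ ≪ ν` and
`μ = g_*μ ≪ g_*ν`, this forces `μ ⟂ₘ μ`, i.e. `μ = 0`.
-/

namespace MeasureTheory.Measure

lemma eq_zero_of_mutuallySingular_map {α : Type*} [MeasurableSpace α] {μ ν : Measure α}
    {f : α → α} (hf : Measurable f) (hμf : map f μ = μ) (hμν : μ ≪ ν) (hν : ν ⟂ₘ map f ν) :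
    μ = 0 :=
  (MutuallySingular.self_iff μ).1 (hν.mono_ac hμν (hμf ▸ hμν.map hf))

section CosetAverage

variable {G X : Type*} [Group G] [MulAction G X] [MeasurableSpace X] [MeasurableConstSMul G X]
  {K : Subgroup G} {μ : Measure X}

lemma map_smul_map_smul (a b : G) (ρ : Measure X) :
    map (a • ·) (map (b • ·) ρ) = map ((a * b) • ·) ρ := by
  rw [map_map (measurable_const_smul a) (measurable_const_smul b)]
  simp only [Function.comp_def, mul_smul]

variable (K μ) in
noncomputable def cosetMap (q : G ⧸ K) : Measure X :=
  map (q.out • ·) μ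

lemma cosetMap_mk (hμ : ∀ k ∈ K, map (k • ·) μ = μ) (g : G) :
    cosetMap K μ g = map (g • ·) μ := by
  obtain ⟨k, hk⟩ := QuotientGroup.mk_out_eq_mul K g
  rw [cosetMap, hk, ← map_smul_map_smul, hμ k k.2]

lemma cosetMap_smul (hμ : ∀ k ∈ K, map (k • ·) μ = μ) (g : G) (q : G ⧸ K) :
    cosetMap K μ (g • q) = map (g • ·) (cosetMap K μ q) := by
  induction q using QuotientGroup.induction_on with
  | H a => rw [MulAction.Quotient.smul_mk, cosetMap_mk hμ, cosetMap_mk hμ, map_smul_map_smul,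
    smul_eq_mul]

theorem exists_isProbabilityMeasure_map_smul_eq_absolutelyContinuous (K : Subgroup G)
    [K.FiniteIndex] (μ : Measure X) [IsProbabilityMeasure μ]
    (hμ : ∀ k ∈ K, map (k • ·) μ = μ) :
    ∃ ν : Measure X, IsProbabilityMeasure ν ∧ (∀ g : G, map (g • ·) ν = ν) ∧ μ ≪ ν := by
  have := Fintype.ofFinite (G ⧸ K)
  set c : ℝ≥0∞ := (Fintype.card (G ⧸ K) : ℝ≥0∞)
  have hc0 : c ≠ 0 := by simp [c]
  have hcosetMap_prob (q : G ⧸ K) : IsProbabilityMeasure (cosetMap K μ q) :=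
    isProbabilityMeasure_map (measurable_const_smul _).aemeasurable
  refine ⟨c⁻¹ • ∑ q, cosetMap K μ q, ⟨?_⟩, fun g => ?_, ?_⟩
  · simp only [smul_apply, coe_finsetSum, Finset.sum_apply, measure_univ, Finset.sum_const,
      Finset.card_univ, nsmul_eq_mul, mul_one, smul_eq_mul]
    exact ENNReal.inv_mul_cancel hc0 (natCast_ne_top _)
  · rw [Measure.map_smul, map_finset_sum' (measurable_const_smul g).aemeasurable]
    simp_rw [← cosetMap_smul hμ]
    exact congrArg _ (Equiv.sum_comp (MulAction.toPerm g) (cosetMap K μ))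
  · have hμ_eq : μ = cosetMap K μ (1 : G) := by rw [cosetMap_mk hμ, one_smul_eq_id, map_id]
    have hμ_le : μ ≤ ∑ q, cosetMap K μ q := hμ_eq.trans_le <|
      Finset.single_le_sum (fun q _ => (cosetMap K μ q).zero_le) (Finset.mem_univ _)
    exact (absolutelyContinuous_of_le hμ_le).trans
      (absolutelyContinuous_smul (ENNReal.inv_ne_zero.2 (natCast_ne_top _)))

end CosetAverage

end MeasureTheory.Measure

theorem singular_implies_commensurably_maximal_general
    {Γ X : Type*} [Group Γ] [TopologicalSpace X]
    [MeasurableSpace X] [BorelSpace X] [MulAction Γ X]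
    (hcont : ∀ γ : Γ, Continuous fun x : X => γ • x)
    (Λ : Subgroup Γ)
    (hsing : ∀ μ : Measure X, IsProbabilityMeasure μ →
      (∀ l ∈ Λ, Measure.map (fun x : X => l • x) μ = μ) →
      ∀ γ ∈ (Λ : Set Γ)ᶜ, μ ⟂ₘ Measure.map (fun x : X => γ • x) μ)
    (Λ' : Subgroup Γ) (hfi : (Λ'.subgroupOf Λ).FiniteIndex)
    (Λ'' : Subgroup Γ) (hle' : Λ' ≤ Λ'')
    (hinv : ∃ μ : Measure X, IsProbabilityMeasure μ ∧
      ∀ g ∈ Λ'', Measure.map (fun x : X => g • x) μ = μ) :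
    Λ'' ≤ Λ := by
  obtain ⟨μ, hμ, hμinv⟩ := hinv
  have : MeasurableConstSMul Λ X := ⟨fun l => (hcont l).measurable⟩
  obtain ⟨ν, hν, hνinv, hμν⟩ :=
    Measure.exists_isProbabilityMeasure_map_smul_eq_absolutelyContinuous
      (Λ'.subgroupOf Λ) μ fun k hk => hμinv k (hle' hk)
  intro g hg
  by_contra hgΛ
  have hνg := hsing ν hν (fun l hl => hνinv ⟨l, hl⟩) g hgΛ
  exact IsProbabilityMeasure.ne_zero μ <|
    Measure.eq_zero_of_mutuallySingular_map (hcont g).measurable (hμinv g hg) hμν hνg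

/-- A singular subgroup is commensurably maximal amenable: if `Λ` is singular for a
continuous action of `Γ` on a compact Hausdorff space `X`, `Λ'` has finite index in `Λ`,
and `Λ'' ≥ Λ'` admits an invariant Borel probability measure on `X`, then `Λ'' ≤ Λ`. -/
theorem singular_implies_commensurably_maximal
    {Γ X : Type*} [Group Γ] [TopologicalSpace X] [CompactSpace X] [T2Space X]
    [MeasurableSpace X] [BorelSpace X] [MulAction Γ X]
    (hcont : ∀ γ : Γ, Continuous fun x : X => γ • x)
    (Λ : Subgroup Γ)
    (hsing : ∀ μ : Measure X, IsProbabilityMeasure μ →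
      (∀ l ∈ Λ, Measure.map (fun x : X => l • x) μ = μ) →
      ∀ γ ∈ (Λ : Set Γ)ᶜ, μ ⟂ₘ Measure.map (fun x : X => γ • x) μ)
    (Λ' : Subgroup Γ) (hle : Λ' ≤ Λ) (hfi : (Λ'.subgroupOf Λ).FiniteIndex)
    (Λ'' : Subgroup Γ) (hle' : Λ' ≤ Λ'')
    (hinv : ∃ μ : Measure X, IsProbabilityMeasure μ ∧
      ∀ g ∈ Λ'', Measure.map (fun x : X => g • x) μ = μ) :
    Λ'' ≤ Λ :=
  singular_implies_commensurably_maximal_general hcont Λ hsing Λ' hfi Λ'' hle' hinv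
end

section
/- Let Γ be a group acting on a measurable space X by measurable bijections, let Λ ≤ Γ be a subgroup, and let Λ' be a subgroup of finite index in Λ. Let μ be a Λ'-invariant probability measure on X. Then the orbit {λ_*μ : λ ∈ Λ} of μ under pushforward by elements of Λ is finite, and the uniform average μ' of the finitely many measures in this orbit is a Λ-invariant probability measure with the property that for every γ ∈ Γ satisfying γ_*μ = μ, the measures γ_*μ' and μ' are not mutually singular. -/
/-!
The map `l ↦ l_*μ` on `Λ` is constant on the cosets of the finite-index subgroup `Λ ∩ Λ'`, so the
orbit `O` of `μ` is finite, and `Λ` permutes `O`, which makes the average `μ'` of `O` invariant.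
Since `μ ∈ O`, we have `μ ≪ μ'`, hence `μ = γ_*μ ≪ γ_*μ'`; a mutually singular pair `γ_*μ' ⟂ μ'`
would then make `μ` singular to itself, i.e. zero.
-/

open MeasureTheory Set
open scoped ENNReal

theorem Set.finite_range_of_mul_right_invariant {G β : Type*} [Group G] (H : Subgroup G)
    [H.FiniteIndex] (f : G → β) (hf : ∀ g, ∀ h ∈ H, f (g * h) = f g) : (range f).Finite := by
  have hlift : ∀ a b : G, (QuotientGroup.leftRel H).r a b → f a = f b := fun a b hab => by
    rw [QuotientGroup.leftRel_apply] at hab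
    simpa using (hf a _ hab).symm
  refine (finite_range fun q : G ⧸ H => Quotient.liftOn' q f hlift).subset ?_
  rintro _ ⟨g, rfl⟩
  exact ⟨QuotientGroup.mk g, rfl⟩

namespace MeasureTheory.Measure

section UniformAverage

variable {X : Type*} [MeasurableSpace X]

noncomputable def uniformAverage (O : Finset (Measure X)) : Measure X :=
  (O.card : ℝ≥0∞)⁻¹ • ∑ ν ∈ O, ν

theorem isProbabilityMeasure_uniformAverage {O : Finset (Measure X)} (hO : O.Nonempty)
    (h : ∀ ν ∈ O, IsProbabilityMeasure ν) : IsProbabilityMeasure (uniformAverage O) := by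
  have hsum : (∑ ν ∈ O, ν) univ = O.card := by
    rw [finsetSum_apply, Finset.sum_congr rfl fun ν hν => (h ν hν).measure_univ]
    simp
  constructor
  rw [uniformAverage, smul_apply, hsum, smul_eq_mul,
    ENNReal.inv_mul_cancel (by simpa using hO.ne_empty) (ENNReal.natCast_ne_top _)]

theorem absolutelyContinuous_uniformAverage {O : Finset (Measure X)} {μ : Measure X}
    (hμ : μ ∈ O) : μ ≪ uniformAverage O :=
  (absolutelyContinuous_of_le (Finset.single_le_sum (fun ν _ => Measure.zero_le ν) hμ)).trans
    (absolutelyContinuous_smul (ENNReal.inv_ne_zero.2 (ENNReal.natCast_ne_top _)))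

theorem map_uniformAverage_of_bijOn {f : X → X} (hf : Measurable f) {O : Finset (Measure X)}
    (hO : BijOn (map f) O O) : map f (uniformAverage O) = uniformAverage O := by
  rw [uniformAverage, Measure.map_smul, map_finset_sum hf.aemeasurable]
  congr 1
  exact Finset.sum_nbij _ hO.mapsTo hO.injOn hO.surjOn fun _ _ => rfl

end UniformAverage

theorem not_mutuallySingular_map_self_of_absolutelyContinuous {X : Type*} [MeasurableSpace X]
    {f : X → X} (hf : Measurable f) {μ ν : Measure X} (hμ : μ ≠ 0) (hμν : μ ≪ ν)
    (hfμ : map f μ = μ) : ¬ map f ν ⟂ₘ ν := by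
  intro h
  have hμμ := h.mono_ac (hμν.map hf) hμν
  rw [hfμ, MutuallySingular.self_iff] at hμμ
  exact hμ hμμ

section PushforwardOrbit

variable {Γ X : Type*} [Group Γ] [MeasurableSpace X] [MulAction Γ X]

theorem map_one_smul (ρ : Measure X) : ρ.map ((1 : Γ) • ·) = ρ := by
  simp only [one_smul, map_id']

def pushforwardOrbit (Λ : Subgroup Γ) (μ : Measure X) : Set (Measure X) :=
  {ν | ∃ l ∈ Λ, ν = μ.map (l • ·)}

variable {Λ : Subgroup Γ} {μ : Measure X}

theorem mem_pushforwardOrbit_self : μ ∈ pushforwardOrbit Λ μ :=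
  ⟨1, Λ.one_mem, (map_one_smul μ).symm⟩

variable [MeasurableConstSMul Γ X]

theorem map_const_smul_map_const_smul (γ δ : Γ) (ρ : Measure X) :
    (ρ.map (δ • ·)).map (γ • ·) = ρ.map ((γ * δ) • ·) := by
  rw [map_map (measurable_const_smul γ) (measurable_const_smul δ)]
  simp only [Function.comp_def, mul_smul]

theorem mapsTo_map_const_smul_pushforwardOrbit {l : Γ} (hl : l ∈ Λ) :
    MapsTo (map (l • ·)) (pushforwardOrbit Λ μ) (pushforwardOrbit Λ μ) := by
  rintro _ ⟨l₀, hl₀, rfl⟩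
  exact ⟨l * l₀, Λ.mul_mem hl hl₀, map_const_smul_map_const_smul l l₀ μ⟩

theorem bijOn_map_const_smul_pushforwardOrbit {l : Γ} (hl : l ∈ Λ) :
    BijOn (map (l • ·)) (pushforwardOrbit Λ μ) (pushforwardOrbit Λ μ) := by
  have hinv : ∀ γ : Γ, Function.LeftInverse (map (γ⁻¹ • · : X → X)) (map (γ • ·)) := fun γ ρ => by
    rw [map_const_smul_map_const_smul, inv_mul_cancel, map_one_smul]
  refine InvOn.bijOn ⟨fun ρ _ => hinv l ρ, fun ρ _ => by simpa using hinv l⁻¹ ρ⟩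
    (mapsTo_map_const_smul_pushforwardOrbit hl)
    (mapsTo_map_const_smul_pushforwardOrbit (Λ.inv_mem hl))

theorem isProbabilityMeasure_of_mem_pushforwardOrbit [IsProbabilityMeasure μ] {ν : Measure X}
    (hν : ν ∈ pushforwardOrbit Λ μ) : IsProbabilityMeasure ν := by
  obtain ⟨l, -, rfl⟩ := hν
  exact isProbabilityMeasure_map (measurable_const_smul l).aemeasurable

theorem finite_pushforwardOrbit (Λ' : Subgroup Γ) [(Λ'.subgroupOf Λ).FiniteIndex]
    (hμ : ∀ l ∈ Λ', μ.map (l • ·) = μ) : (pushforwardOrbit Λ μ).Finite := by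
  have hrange : pushforwardOrbit Λ μ = range fun l : Λ => μ.map ((l : Γ) • ·) := by
    ext ν
    exact ⟨fun ⟨l, hl, hν⟩ => ⟨⟨l, hl⟩, hν.symm⟩, fun ⟨l, hν⟩ => ⟨l, l.2, hν.symm⟩⟩
  rw [hrange]
  refine finite_range_of_mul_right_invariant (Λ'.subgroupOf Λ) _ fun l h hh => ?_
  rw [Subgroup.coe_mul, ← map_const_smul_map_const_smul, hμ h (Subgroup.mem_subgroupOf.1 hh)]

end PushforwardOrbit

end MeasureTheory.Measure

open MeasureTheory.Measure in
theorem finite_orbit_average_invariant_not_singular_general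
    {Γ X : Type*} [Group Γ] [MeasurableSpace X] [MulAction Γ X]
    (hmeas : ∀ γ : Γ, Measurable fun x : X => γ • x)
    (Λ Λ' : Subgroup Γ) (hfi : (Λ'.subgroupOf Λ).FiniteIndex)
    (μ : Measure X) (hprob : IsProbabilityMeasure μ)
    (hinv : ∀ l ∈ Λ', Measure.map (fun x : X => l • x) μ = μ) :
    ∃ (O : Finset (Measure X)) (μ' : Measure X),
      (O : Set (Measure X)) =
        {ν : Measure X | ∃ l ∈ Λ, ν = Measure.map (fun x : X => l • x) μ} ∧
      μ' = (O.card : ℝ≥0∞)⁻¹ • ∑ ν ∈ O, ν ∧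
      IsProbabilityMeasure μ' ∧
      (∀ l ∈ Λ, Measure.map (fun x : X => l • x) μ' = μ') ∧
      (∀ γ : Γ, Measure.map (fun x : X => γ • x) μ = μ →
        ¬ (Measure.map (fun x : X => γ • x) μ' ⟂ₘ μ')) := by
  have : MeasurableConstSMul Γ X := ⟨hmeas⟩
  have hfin := finite_pushforwardOrbit (Λ := Λ) Λ' hinv
  have hμO : μ ∈ hfin.toFinset := hfin.mem_toFinset.2 mem_pushforwardOrbit_self
  refine ⟨hfin.toFinset, uniformAverage hfin.toFinset, hfin.coe_toFinset, rfl, ?_, ?_, ?_⟩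
  · exact isProbabilityMeasure_uniformAverage ⟨μ, hμO⟩ fun ν hν =>
      isProbabilityMeasure_of_mem_pushforwardOrbit (hfin.mem_toFinset.1 hν)
  · intro l hl
    exact map_uniformAverage_of_bijOn (measurable_const_smul l)
      (by simpa using bijOn_map_const_smul_pushforwardOrbit hl)
  · intro γ hγ
    exact not_mutuallySingular_map_self_of_absolutelyContinuous (measurable_const_smul γ)
      (IsProbabilityMeasure.ne_zero μ) (absolutelyContinuous_uniformAverage hμO) hγ

/-- If `μ` is a probability measure invariant under a finite-index subgroup `Λ'` of `Λ`,
then the `Λ`-orbit of `μ` under pushforward is finite, and the uniform average `μ'` of the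
measures in this orbit is a `Λ`-invariant probability measure such that for every `γ ∈ Γ`
with `γ_*μ = μ`, the measures `γ_*μ'` and `μ'` are not mutually singular. -/
theorem finite_orbit_average_invariant_not_singular
    {Γ X : Type*} [Group Γ] [MeasurableSpace X] [MulAction Γ X]
    (hmeas : ∀ γ : Γ, Measurable fun x : X => γ • x)
    (Λ Λ' : Subgroup Γ) (hle : Λ' ≤ Λ) (hfi : (Λ'.subgroupOf Λ).FiniteIndex)
    (μ : Measure X) (hprob : IsProbabilityMeasure μ)
    (hinv : ∀ l ∈ Λ', Measure.map (fun x : X => l • x) μ = μ) :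
    ∃ (O : Finset (Measure X)) (μ' : Measure X),
      (O : Set (Measure X)) =
        {ν : Measure X | ∃ l ∈ Λ, ν = Measure.map (fun x : X => l • x) μ} ∧
      μ' = (O.card : ℝ≥0∞)⁻¹ • ∑ ν ∈ O, ν ∧
      IsProbabilityMeasure μ' ∧
      (∀ l ∈ Λ, Measure.map (fun x : X => l • x) μ' = μ') ∧
      (∀ γ : Γ, Measure.map (fun x : X => γ • x) μ = μ →
        ¬ (Measure.map (fun x : X => γ • x) μ' ⟂ₘ μ')) :=
  finite_orbit_average_invariant_not_singular_general hmeas Λ Λ' hfi μ hprob hinv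
end

section
/- Let G be a group acting on a measurable space X by measurable bijections and let ν be a G-invariant probability measure on X. Assume the action is ergodic in the sense that every measurable subset A ⊆ X with g•A = A for all g ∈ G satisfies ν(A) = 0 or ν(A) = 1. Let W ⊆ X be a measurable set with ν(W) > 0 such that for every g ∈ G, either g•W = W (as sets) or ν(g•W ∩ W) = 0. Then the family of translates {g•W : g ∈ G} is finite, of cardinality at most 1/ν(W), and there exist finitely many elements g₁, …, g_n ∈ G such that ν(g₁•W ∪ ⋯ ∪ g_n•W) = 1. -/
/-!
Distinct translates of `W` are pairwise a.e. disjoint (invariance moves `g • W ∩ h • W` to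
`(g⁻¹ * h) • W ∩ W`) and all have measure `ν W`, so at most `1 / ν W` of them fit in a
probability space. The union of all translates is therefore a finite union, hence measurable;
it is `G`-invariant and contains `W`, so ergodicity forces it to have full measure.
-/

open MeasureTheory Set
open scoped Pointwise ENNReal

section FamilyOfEqualMeasure

variable {X : Type*} [MeasurableSpace X] {μ : Measure X} {𝒜 : Set (Set X)} {c : ℝ≥0∞}

theorem finite_of_pairwise_aedisjoint_of_measure_eq [IsFiniteMeasure μ] (hc : c ≠ 0)
    (hdisj : 𝒜.Pairwise (AEDisjoint μ)) (hmeas : ∀ A ∈ 𝒜, NullMeasurableSet A μ)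
    (hμ : ∀ A ∈ 𝒜, μ A = c) : 𝒜.Finite := by
  have := Measure.finite_const_le_meas_of_disjoint_iUnion₀ μ (pos_iff_ne_zero.2 hc)
    (As := ((↑) : 𝒜 → Set X)) (fun A => hmeas A A.2) hdisj.subtype (measure_ne_top μ _)
  rw [← finite_coe_iff]
  exact finite_univ_iff.1 (by simpa [Subtype.forall, hμ] using this)

theorem ncard_mul_le_measure_univ_of_pairwise_aedisjoint
    (hdisj : 𝒜.Pairwise (AEDisjoint μ)) (hmeas : ∀ A ∈ 𝒜, NullMeasurableSet A μ)
    (hμ : ∀ A ∈ 𝒜, μ A = c) : 𝒜.ncard * c ≤ μ univ := by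
  rcases 𝒜.finite_or_infinite with h𝒜 | h𝒜
  · calc (𝒜.ncard : ℝ≥0∞) * c = ∑ A ∈ h𝒜.toFinset, μ A := by
          rw [Finset.sum_congr rfl fun A hA => hμ A (h𝒜.mem_toFinset.1 hA), Finset.sum_const,
            nsmul_eq_mul, ncard_eq_toFinset_card _ h𝒜]
      _ = μ (⋃ A ∈ h𝒜.toFinset, A) :=
          (measure_biUnion_finset₀ (by simpa using hdisj) (by simpa using hmeas)).symm
      _ ≤ μ univ := measure_mono (subset_univ _)
  · simp [h𝒜.ncard]

end FamilyOfEqualMeasure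

theorem aedisjoint_smul_set_of_ne {G X : Type*} [Group G] [MulAction G X] [MeasurableSpace X]
    {ν : Measure X} [SMulInvariantMeasure G X ν] {W : Set X} (halt : ∀ g : G, g • W = W ∨ ν (g • W ∩ W) = 0) {g h : G}
    (hne : g • W ≠ h • W) : AEDisjoint ν (g • W) (h • W) := by
  have hmove : ν (g • W ∩ h • W) = ν ((g⁻¹ * h) • W ∩ W) := by
    rw [← measure_smul ν g⁻¹, smul_set_inter, inv_smul_smul, smul_smul, inter_comm]
  rcases halt (g⁻¹ * h) with heq | hnull
  · refine absurd ?_ hne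
    conv_lhs => rw [← heq, smul_smul, mul_inv_cancel_left]
  · rwa [AEDisjoint, hmove]

theorem smul_iUnion_smul {G X : Type*} [Group G] [MulAction G X] (g : G) (W : Set X) :
    g • ⋃ h : G, h • W = ⋃ h : G, h • W := by
  simp only [smul_set_iUnion, smul_smul]
  exact (mul_left_surjective g).iUnion_comp (· • W)

theorem exists_fin_iUnion_eq_iUnion_of_finite_range {ι α : Type*} {F : ι → Set α}
    (hF : (range F).Finite) : ∃ (n : ℕ) (g : Fin n → ι), ⋃ i, F (g i) = ⋃ i, F i := by
  obtain ⟨n, f, -, hf⟩ := hF.fin_param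
  choose g hg using fun i => hf ▸ mem_range_self (f := f) i
  exact ⟨n, g, by simp_rw [hg, ← sUnion_range, hf]⟩

/-- For an ergodic measure-preserving action of `G` on `(X, ν)` and a positive-measure
set `W` whose translates are either equal to `W` or essentially disjoint from it, the
family of translates `{g • W : g ∈ G}` is finite of cardinality at most `1 / ν W`, and
finitely many translates cover `X` up to measure zero. -/
theorem translates_finite_and_cover
    {G X : Type*} [Group G] [MeasurableSpace X] [MulAction G X]
    (hmeas : ∀ g : G, Measurable fun x : X => g • x)
    (ν : Measure X) (hprob : IsProbabilityMeasure ν)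
    (hinv : ∀ (g : G) (A : Set X), MeasurableSet A → ν (g • A) = ν A)
    (herg : ∀ A : Set X, MeasurableSet A → (∀ g : G, g • A = A) → ν A = 0 ∨ ν A = 1)
    (W : Set X) (hW : MeasurableSet W) (hWpos : 0 < ν W)
    (halt : ∀ g : G, g • W = W ∨ ν ((g • W) ∩ W) = 0) :
    ({A : Set X | ∃ g : G, A = g • W}.Finite ∧
      ({A : Set X | ∃ g : G, A = g • W}.ncard : ENNReal) ≤ 1 / ν W) ∧
    ∃ (n : ℕ) (g : Fin n → G), ν (⋃ i, g i • W) = 1 := by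
  have : MeasurableConstSMul G X := ⟨hmeas⟩
  have : SMulInvariantMeasure G X ν :=
    ⟨fun g A hA => by rw [preimage_smul]; exact hinv g⁻¹ A hA⟩
  have htrans : {A : Set X | ∃ g : G, A = g • W} = range fun g : G => g • W := by
    ext; simp [eq_comm]
  have hdisj : (range fun g : G => g • W).Pairwise (AEDisjoint ν) := by
    rintro _ ⟨g, rfl⟩ _ ⟨h, rfl⟩ hne
    exact aedisjoint_smul_set_of_ne halt hne
  have hnull : ∀ A ∈ range fun g : G => g • W, NullMeasurableSet A ν := by
    rintro _ ⟨g, rfl⟩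
    exact (hW.const_smul g).nullMeasurableSet
  have hsize : ∀ A ∈ range fun g : G => g • W, ν A = ν W := by
    rintro _ ⟨g, rfl⟩
    exact measure_smul ν g W
  have hfin := finite_of_pairwise_aedisjoint_of_measure_eq hWpos.ne' hdisj hnull hsize
  refine ⟨⟨htrans ▸ hfin, ?_⟩, ?_⟩
  · rw [htrans, ENNReal.le_div_iff_mul_le (.inl hWpos.ne') (.inl (measure_ne_top ν W)),
      ← measure_univ (μ := ν)]
    exact ncard_mul_le_measure_univ_of_pairwise_aedisjoint hdisj hnull hsize
  · obtain ⟨n, g, hg⟩ := exists_fin_iUnion_eq_iUnion_of_finite_range hfin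
    have hinvariant : ∀ a : G, a • ⋃ i, g i • W = ⋃ i, g i • W := by
      rw [hg]; exact (smul_iUnion_smul · W)
    refine ⟨n, g, (herg _ (.iUnion fun i => hW.const_smul (g i)) hinvariant).resolve_left ?_⟩
    rw [hg]
    exact (hWpos.trans_le (measure_mono (subset_iUnion_of_subset 1 (one_smul G W).ge))).ne'
end

section
/- Every norm-one element of ℤ[1/5][i] is generated by i and (4+3i)/5: precisely, if z ∈ ℂ satisfies z · conj(z) = 1 and there exist n ∈ ℕ and a Gaussian integer w ∈ ℤ[i] with w = 5^n · z (i.e., z ∈ ℤ[1/5][i]), then there exist a ∈ {0, 1, 2, 3} and m ∈ ℤ such that z = i^a · ((4 + 3i)/5)^m. -/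
/-!
Write `5 = (2 + i)(2 - i)` with both factors prime in `ℤ[i]`. If `5 ^ n * z = w ∈ ℤ[i]` and
`|z| = 1`, then `w * conj w = 25 ^ n`. For `n ≥ 1` one of the conjugate primes divides `w`, and
applying the same argument to the cofactor shows that one of `(2 + i)² = 3 + 4i`,
`(2 - i)² = 3 - 4i` or `5` divides `w`. Dividing by it lowers `n` by one and changes `z` by
`(3 + 4i)/5 = i u⁻¹`, `(3 - 4i)/5 = -i u` or `1`, where `u = (4 + 3i)/5`. At `n = 0`, `w` is one of
the units `±1, ±i`.
-/

open Complex GaussianInt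

theorem Zsqrtd.irreducible_of_natAbs_norm_prime {d : ℤ} {x : ℤ√d} (h : x.norm.natAbs.Prime) :
    Irreducible x := by
  refine ⟨fun hx => h.ne_one (Zsqrtd.norm_eq_one_iff.mpr hx), fun a b hab => ?_⟩
  have hmul : a.norm.natAbs * b.norm.natAbs = x.norm.natAbs := by
    rw [hab, Zsqrtd.norm_mul, Int.natAbs_mul]
  rcases h.eq_one_or_self_of_dvd _ ⟨_, hmul.symm⟩ with ha | ha
  · exact Or.inl (Zsqrtd.norm_eq_one_iff.mp ha)
  · rw [ha, Nat.mul_eq_left h.ne_zero] at hmul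
    exact Or.inr (Zsqrtd.norm_eq_one_iff.mp hmul)

theorem Prime.dvd_or_star_dvd_of_dvd_mul_star {R : Type*} [CommMonoidWithZero R] [StarMul R]
    {p x : R} (hp : Prime p) (h : p ∣ x * star x) : p ∣ x ∨ star p ∣ x := by
  refine (hp.dvd_or_dvd h).imp_right fun ⟨c, hc⟩ => ⟨star c, ?_⟩
  rw [← star_star x, hc, star_mul']

theorem Prime.sq_dvd_or_mul_star_dvd_of_dvd {R : Type*} [CommRing R] [IsDomain R] [StarRing R]
    {p w : R} (hp : Prime p) (hpw : p ∣ w) (h : (p * star p) ^ 2 ∣ w * star w) :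
    p ^ 2 ∣ w ∨ p * star p ∣ w := by
  obtain ⟨c, rfl⟩ := hpw
  have hc : p * star p ∣ c * star c := by
    have hne : p * star p ≠ 0 := mul_ne_zero hp.ne_zero (star_ne_zero.mpr hp.ne_zero)
    rw [star_mul', show p * c * (star p * star c) = p * star p * (c * star c) by ring, sq] at h
    exact (mul_dvd_mul_iff_left hne).mp h
  rcases hp.dvd_or_star_dvd_of_dvd_mul_star ((dvd_mul_right p _).trans hc) with ⟨d, rfl⟩ | ⟨d, rfl⟩
  · exact Or.inl ⟨d, by ring⟩
  · exact Or.inr ⟨d, by ring⟩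

namespace GaussianInt

theorem prime_of_natAbs_norm_prime {x : GaussianInt} (h : x.norm.natAbs.Prime) : Prime x :=
  irreducible_iff_prime.mp (Zsqrtd.irreducible_of_natAbs_norm_prime h)

theorem dvd_of_twentyFive_dvd_mul_star {w : GaussianInt} (h : 25 ∣ w * star w) :
    ⟨3, 4⟩ ∣ w ∨ ⟨3, -4⟩ ∣ w ∨ 5 ∣ w := by
  have sq_dvd_or_five_dvd (p : GaussianInt) (hp : p.norm.natAbs = 5) (hp5 : p * star p = 5)
      (hpw : p ∣ w) : p ^ 2 ∣ w ∨ 5 ∣ w := by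
    rw [← hp5]
    exact (prime_of_natAbs_norm_prime (hp ▸ Nat.prime_five)).sq_dvd_or_mul_star_dvd_of_dvd hpw
      (by rwa [hp5])
  have h5 : (⟨2, 1⟩ : GaussianInt) ∣ w * star w :=
    (Dvd.intro ⟨2, -1⟩ rfl).trans ((Dvd.intro 5 rfl).trans h)
  rcases (prime_of_natAbs_norm_prime (by decide)).dvd_or_star_dvd_of_dvd_mul_star h5 with hw | hw
  · exact (sq_dvd_or_five_dvd _ rfl rfl hw).imp_right Or.inr
  · exact Or.inr (sq_dvd_or_five_dvd _ rfl rfl hw)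

theorem exists_eq_I_zpow_of_mul_star_eq_one {w : GaussianInt} (h : w * star w = 1) :
    ∃ k : ℤ, (w : ℂ) = I ^ k := by
  obtain ⟨a, b⟩ := w
  have hab : a ^ 2 + b ^ 2 = 1 := by simpa [sq] using congrArg Zsqrtd.re h
  obtain ⟨ha1, ha2⟩ : -1 ≤ a ∧ a ≤ 1 := by constructor <;> nlinarith
  obtain ⟨hb1, hb2⟩ : -1 ≤ b ∧ b ≤ 1 := by constructor <;> nlinarith
  rw [toComplex_def']
  interval_cases a <;> interval_cases b <;> simp at hab
  · exact ⟨2, by simp⟩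
  · exact ⟨-1, by simp⟩
  · exact ⟨1, by simp⟩
  · exact ⟨0, by simp⟩

end GaussianInt

theorem four_add_three_I_div_five_ne_zero : (4 + 3 * I) / 5 ≠ 0 :=
  div_ne_zero (fun h => by simpa using congrArg im h) (by norm_num)

def iFourThreeFifthPowers : Submonoid ℂ where
  carrier := {z | ∃ k m : ℤ, z = I ^ k * ((4 + 3 * I) / 5) ^ m}
  mul_mem' := by
    rintro _ _ ⟨k, m, rfl⟩ ⟨k', m', rfl⟩
    refine ⟨k + k', m + m', ?_⟩
    rw [zpow_add₀ I_ne_zero, zpow_add₀ four_add_three_I_div_five_ne_zero]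
    ring
  one_mem' := ⟨0, 0, by simp⟩

theorem three_add_four_I_div_five_mem : (3 + 4 * I) / 5 ∈ iFourThreeFifthPowers :=
  ⟨1, -1, by
    rw [zpow_one, zpow_neg_one, ← div_eq_mul_inv, eq_div_iff four_add_three_I_div_five_ne_zero]
    linear_combination (12 / 25 : ℂ) * I_sq⟩

theorem three_sub_four_I_div_five_mem : (3 - 4 * I) / 5 ∈ iFourThreeFifthPowers :=
  ⟨-1, 1, by
    rw [zpow_neg_one, zpow_one, inv_I]
    linear_combination (3 / 5 : ℂ) * I_sq⟩

theorem GaussianInt.div_five_pow_mem_of_mul_star_eq (n : ℕ) (w : GaussianInt)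
    (hw : w * star w = 25 ^ n) : (w : ℂ) / 5 ^ n ∈ iFourThreeFifthPowers := by
  induction n generalizing w with
  | zero =>
    obtain ⟨k, hk⟩ := exists_eq_I_zpow_of_mul_star_eq_one hw
    exact ⟨k, 0, by simp [hk]⟩
  | succ n ih =>
    have descend : ∀ d w' : GaussianInt, w = d * w' → d * star d = 25 →
        (d : ℂ) / 5 ∈ iFourThreeFifthPowers → (w : ℂ) / 5 ^ (n + 1) ∈ iFourThreeFifthPowers := by
      rintro d w' rfl hd hdS
      have hw' : w' * star w' = 25 ^ n := by
        refine mul_left_cancel₀ (show (25 : GaussianInt) ≠ 0 by decide) ?_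
        rw [← pow_succ', ← hw, ← hd, star_mul']
        ring
      have hsplit :
          ((d * w' : GaussianInt) : ℂ) / 5 ^ (n + 1) = (d : ℂ) / 5 * ((w' : ℂ) / 5 ^ n) := by
        rw [toComplex_mul, pow_succ]
        ring
      rw [hsplit]
      exact iFourThreeFifthPowers.mul_mem hdS (ih w' hw')
    rcases dvd_of_twentyFive_dvd_mul_star (hw ▸ dvd_pow_self 25 n.succ_ne_zero) with
      ⟨w', hw'⟩ | ⟨w', hw'⟩ | ⟨w', hw'⟩
    · exact descend _ w' hw' rfl (by simpa [toComplex_def'] using three_add_four_I_div_five_mem)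
    · exact descend _ w' hw' rfl
        (by simpa [toComplex_def', sub_eq_add_neg] using three_sub_four_I_div_five_mem)
    · exact descend 5 w' hw' rfl (by rw [map_ofNat, div_self (by norm_num)]; exact one_mem _)

/-- Every norm-one element of `ℤ[1/5][i] ⊆ ℂ` is of the form `i^a * ((4+3i)/5)^m`
with `a ∈ {0,1,2,3}` and `m ∈ ℤ`. -/
theorem norm_one_unit_Z_one_fifth_i (z : ℂ) (hz : z * (starRingEnd ℂ) z = 1)
    (hden : ∃ (n : ℕ) (w : GaussianInt), GaussianInt.toComplex w = 5 ^ n * z) :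
    ∃ (a : Fin 4) (m : ℤ), z = Complex.I ^ (a : ℕ) * ((4 + 3 * Complex.I) / 5) ^ m := by
  obtain ⟨n, w, hw⟩ := hden
  have hww : w * star w = 25 ^ n := toComplex_injective <| by
    rw [toComplex_mul, toComplex_star, hw, map_mul, mul_mul_mul_comm, hz, mul_one,
      map_pow, map_pow, map_ofNat, map_ofNat, ← mul_pow]
    norm_num
  obtain ⟨k, m, hkm⟩ := GaussianInt.div_five_pow_mem_of_mul_star_eq n w hww
  rw [hw, mul_div_cancel_left₀ z (by norm_num)] at hkm
  rw [I_zpow_eq_zpow_mod, ← Int.toNat_of_nonneg (Int.emod_nonneg k (by norm_num)), zpow_natCast] at hkm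
  exact ⟨⟨(k % 4).toNat, by omega⟩, m, hkm⟩
end
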